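/- Fix ω > 0 and β ∈ (2/3, 1), and for each h > 0 set ħ = h²ω² and let (x_n(h), v_n(h)) be the trapezoidal barrier recursion with x₀ = βh, v₀ = −1. Then as h → ∞: v₁(h) → 1 − 2β, v₂(h) → 2β − 1, v₃(h) → 8β − 5, and x₃(h)/h → 5β − 3; moreover for all sufficiently large h one has x₁(h) < 0, x₂(h) < 0 and x₃(h) > 0, so the particle exits the barrier after three steps with limiting exit velocity 8β − 5 (which differs from the correct value 1 except at β = 3/4). -/

import Mathlib

open Filter

/-- The trapezoidal scheme for a unit-mass particle against the one-sided
quadratic barrier `P(x) = (1/2)ω²x²` for `x < 0`, `P(x) = 0` for `x ≥ 0`, with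
time step `h`, `ħ = h²ω²`, collision phase `β`, initial data `x₀ = βh`,
`v₀ = −1`: `c_n = x_n + h v_n − (ħ/4)·min(x_n,0)`; `x_{n+1} = c_n` if `c_n ≥ 0`,
else `c_n/(1+ħ/4)`; and `v_{n+1} = v_n − (h/2)ω²·(min(x_n,0) + min(x_{n+1},0))`. -/
noncomputable def trapseq (ω h β : ℝ) : ℕ → ℝ × ℝ
  | 0 => (β * h, -1)
  | n + 1 =>
    let p := trapseq ω h β n
    let c := p.1 + h * p.2 - (h ^ 2 * ω ^ 2 / 4) * min p.1 0
    let x' := if 0 ≤ c then c else c / (1 + h ^ 2 * ω ^ 2 / 4)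
    (x', p.2 - (h / 2) * ω ^ 2 * (min p.1 0 + min x' 0))

lemma trapseq_succ (ω h β : ℝ) (n : ℕ) :
    trapseq ω h β (n + 1) =
      (let p := trapseq ω h β n
       let c := p.1 + h * p.2 - (h ^ 2 * ω ^ 2 / 4) * min p.1 0
       let x' := if 0 ≤ c then c else c / (1 + h ^ 2 * ω ^ 2 / 4)
       (x', p.2 - (h / 2) * ω ^ 2 * (min p.1 0 + min x' 0))) := rfl

lemma step1 (ω β h : ℝ) (hω : 0 < ω) (hβ0 : 2/3 < β) (hβ1 : β < 1) (hh : 0 < h) :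
    trapseq ω h β 1 =
      ((β - 1) * h / (1 + h ^ 2 * ω ^ 2 / 4),
       ((h ^ 2 * ω ^ 2 / 4) * (1 - 2 * β) - 1) / (1 + h ^ 2 * ω ^ 2 / 4)) := by
  have hq0 : 0 < h ^ 2 * ω ^ 2 / 4 := by positivity
  have hD : 0 < 1 + h ^ 2 * ω ^ 2 / 4 := by linarith
  have hmin0 : min (β * h) 0 = 0 := min_eq_right (by nlinarith)
  have hc0 : ¬ (0 ≤ β * h + h * (-1) - h ^ 2 * ω ^ 2 / 4 * 0) := by
    push_neg; nlinarith
  have hx1 : (β * h + h * (-1) - h ^ 2 * ω ^ 2 / 4 * 0) / (1 + h ^ 2 * ω ^ 2 / 4) ≤ 0 :=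
    div_nonpos_of_nonpos_of_nonneg (by nlinarith) (by linarith)
  simp only [trapseq, hmin0, if_neg hc0, min_eq_left hx1, Prod.mk.injEq]
  constructor <;> (field_simp; ring)

lemma step2 (ω β h : ℝ) (hω : 0 < ω) (hβ0 : 2/3 < β) (hβ1 : β < 1) (hh : 0 < h) :
    trapseq ω h β 2 =
      (((β - 2) + (h ^ 2 * ω ^ 2 / 4) * (2 - 3 * β)) * h / (1 + h ^ 2 * ω ^ 2 / 4) ^ 2,
       ((h ^ 2 * ω ^ 2 / 4) ^ 2 * (2 * β - 1) + (h ^ 2 * ω ^ 2 / 4) * (6 - 6 * β) - 1)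
         / (1 + h ^ 2 * ω ^ 2 / 4) ^ 2) := by
  have hq0 : 0 < h ^ 2 * ω ^ 2 / 4 := by positivity
  have hD : 0 < 1 + h ^ 2 * ω ^ 2 / 4 := by linarith
  set q := h ^ 2 * ω ^ 2 / 4 with hqdef
  have e2 : trapseq ω h β 2 =
      (let p := trapseq ω h β 1
       let c := p.1 + h * p.2 - q * min p.1 0
       let x' := if 0 ≤ c then c else c / (1 + q)
       (x', p.2 - (h / 2) * ω ^ 2 * (min p.1 0 + min x' 0))) := trapseq_succ ω h β 1
  rw [e2, step1 ω β h hω hβ0 hβ1 hh]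
  set x1 := (β - 1) * h / (1 + q) with hx1def
  set v1 := (q * (1 - 2 * β) - 1) / (1 + q) with hv1def
  have hx1le : x1 ≤ 0 := div_nonpos_of_nonpos_of_nonneg (by nlinarith) (by linarith)
  have hmin1 : min x1 0 = x1 := min_eq_left hx1le
  simp only [hmin1]
  have hfac : β - 2 + q * (2 - 3 * β) < 0 := by nlinarith
  have hc1 : x1 + h * v1 - q * x1 = h * ((β - 2) + q * (2 - 3 * β)) / (1 + q) := by
    rw [hx1def, hv1def]; field_simp; ring
  have hnum : h * ((β - 2) + q * (2 - 3 * β)) < 0 := mul_neg_of_pos_of_neg hh hfac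
  have hc1neg : ¬ (0 ≤ x1 + h * v1 - q * x1) := by
    rw [hc1]; push_neg; exact div_neg_of_neg_of_pos hnum hD
  have hx2le : (x1 + h * v1 - q * x1) / (1 + q) ≤ 0 := by
    rw [hc1]
    exact div_nonpos_of_nonpos_of_nonneg (div_nonpos_of_nonpos_of_nonneg hnum.le hD.le) hD.le
  simp only [if_neg hc1neg, min_eq_left hx2le, Prod.mk.injEq]
  constructor
  · rw [hc1]; field_simp
  · rw [hc1, hx1def, hv1def]; field_simp; ring

lemma step3 (ω β h : ℝ) (hω : 0 < ω) (hβ0 : 2/3 < β) (hβ1 : β < 1) (hh : 4 / ω ≤ h) :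
    trapseq ω h β 3 =
      (((h ^ 2 * ω ^ 2 / 4) ^ 2 * (5 * β - 3) + (h ^ 2 * ω ^ 2 / 4) * (10 - 10 * β) + (β - 3)) * h
         / (1 + h ^ 2 * ω ^ 2 / 4) ^ 2,
       ((h ^ 2 * ω ^ 2 / 4) ^ 2 * (8 * β - 5) + (h ^ 2 * ω ^ 2 / 4) * (10 - 8 * β) - 1)
         / (1 + h ^ 2 * ω ^ 2 / 4) ^ 2) := by
  have hh0 : 0 < h := lt_of_lt_of_le (by positivity) hh
  have hq3 : 3 ≤ h ^ 2 * ω ^ 2 / 4 := by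
    have h4 : 4 / ω * ω = 4 := div_mul_cancel₀ 4 hω.ne'
    nlinarith [mul_le_mul hh hh (le_of_lt (by positivity : (0:ℝ) < 4 / ω)) hh0.le]
  have hq0 : 0 < h ^ 2 * ω ^ 2 / 4 := by positivity
  have hD : 0 < 1 + h ^ 2 * ω ^ 2 / 4 := by linarith
  set q := h ^ 2 * ω ^ 2 / 4 with hqdef
  have e3 : trapseq ω h β 3 =
      (let p := trapseq ω h β 2
       let c := p.1 + h * p.2 - q * min p.1 0
       let x' := if 0 ≤ c then c else c / (1 + q)
       (x', p.2 - (h / 2) * ω ^ 2 * (min p.1 0 + min x' 0))) := trapseq_succ ω h β 2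
  rw [e3, step2 ω β h hω hβ0 hβ1 hh0]
  set x2 := ((β - 2) + q * (2 - 3 * β)) * h / (1 + q) ^ 2 with hx2def
  set v2 := (q ^ 2 * (2 * β - 1) + q * (6 - 6 * β) - 1) / (1 + q) ^ 2 with hv2def
  have hD2 : (0:ℝ) < (1 + q) ^ 2 := by positivity
  have hfac : β - 2 + q * (2 - 3 * β) < 0 := by nlinarith
  have hx2le : x2 ≤ 0 :=
    div_nonpos_of_nonpos_of_nonneg (mul_nonpos_of_nonpos_of_nonneg hfac.le hh0.le) hD2.le
  have hmin2 : min x2 0 = x2 := min_eq_left hx2le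
  simp only [hmin2]
  have hN3 : 0 < q ^ 2 * (5 * β - 3) + q * (10 - 10 * β) + (β - 3) := by
    have h9 : 9 ≤ q ^ 2 := by nlinarith
    nlinarith
  have hc2 : x2 + h * v2 - q * x2 =
      (q ^ 2 * (5 * β - 3) + q * (10 - 10 * β) + (β - 3)) * h / (1 + q) ^ 2 := by
    rw [hx2def, hv2def]; field_simp; ring
  have hc2pos : 0 ≤ x2 + h * v2 - q * x2 := by
    rw [hc2]; positivity
  have hmin3 : min (x2 + h * v2 - q * x2) 0 = 0 := min_eq_right hc2pos
  simp only [if_pos hc2pos, hmin3, Prod.mk.injEq]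
  constructor
  · rw [hc2]
  · rw [hx2def, hv2def]; field_simp; ring

lemma ratlim1 (a c : ℝ) : Tendsto (fun q : ℝ => (q * a + c) / (1 + q)) atTop (nhds a) := by
  have h1 : Tendsto (fun q : ℝ => q⁻¹) atTop (nhds 0) := tendsto_inv_atTop_zero
  have h2 : Tendsto (fun q : ℝ => (a + c * q⁻¹) / (q⁻¹ + 1)) atTop (nhds ((a + c * 0) / (0 + 1))) :=
    Tendsto.div (tendsto_const_nhds.add (h1.const_mul c)) (h1.add tendsto_const_nhds) (by norm_num)
  have h3 : (a + c * 0) / (0 + 1) = a := by norm_num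
  rw [h3] at h2
  refine h2.congr' ?_
  filter_upwards [eventually_gt_atTop (0:ℝ)] with q hq
  have hq' : q ≠ 0 := hq.ne'
  field_simp

lemma ratlim2 (a b c : ℝ) :
    Tendsto (fun q : ℝ => (q ^ 2 * a + q * b + c) / (1 + q) ^ 2) atTop (nhds a) := by
  have h1 : Tendsto (fun q : ℝ => q⁻¹) atTop (nhds 0) := tendsto_inv_atTop_zero
  have h2 : Tendsto (fun q : ℝ => (a + b * q⁻¹ + c * q⁻¹ ^ 2) / (q⁻¹ + 1) ^ 2) atTop
      (nhds ((a + b * 0 + c * 0 ^ 2) / (0 + 1) ^ 2)) := by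
    refine Tendsto.div ?_ ?_ (by norm_num)
    · exact (tendsto_const_nhds.add (h1.const_mul b)).add ((h1.pow 2).const_mul c)
    · exact (h1.add tendsto_const_nhds).pow 2
  have h3 : (a + b * 0 + c * 0 ^ 2) / (0 + 1) ^ 2 = a := by norm_num
  rw [h3] at h2
  refine h2.congr' ?_
  filter_upwards [eventually_gt_atTop (0:ℝ)] with q hq
  have hq' : q ≠ 0 := hq.ne'
  field_simp

/-- For phase `β ∈ (2/3, 1)`, in the large time-step limit `h → ∞` the
trapezoidal scheme resolves the collision in three steps with `v₁ → 1−2β`,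
`v₂ → 2β−1`, `v₃ → 8β−5` and `x₃/h → 5β−3`, eventually satisfying `x₁ < 0`,
`x₂ < 0` and `x₃ > 0`; the limiting exit velocity `8β−5` differs from the
correct value `1` except at `β = 3/4`. -/
theorem trapezoidal_barrier_large_timestep_late_phase
    (ω β : ℝ) (hω : 0 < ω) (hβ0 : 2 / 3 < β) (hβ1 : β < 1) :
    Tendsto (fun h : ℝ => (trapseq ω h β 1).2) atTop (nhds (1 - 2 * β)) ∧
    Tendsto (fun h : ℝ => (trapseq ω h β 2).2) atTop (nhds (2 * β - 1)) ∧
    Tendsto (fun h : ℝ => (trapseq ω h β 3).2) atTop (nhds (8 * β - 5)) ∧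
    Tendsto (fun h : ℝ => (trapseq ω h β 3).1 / h) atTop (nhds (5 * β - 3)) ∧
    (∀ᶠ h : ℝ in atTop,
      (trapseq ω h β 1).1 < 0 ∧ (trapseq ω h β 2).1 < 0 ∧
      0 < (trapseq ω h β 3).1) := by
  have hqT : Tendsto (fun h : ℝ => h ^ 2 * ω ^ 2 / 4) atTop atTop := by
    have : Tendsto (fun h : ℝ => h ^ 2 * (ω ^ 2 / 4)) atTop atTop :=
      Tendsto.atTop_mul_const (by positivity) (tendsto_pow_atTop two_ne_zero)
    exact this.congr (fun h => by ring)
  have hE : ∀ h : ℝ, 4 / ω ≤ h →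
      0 < h ∧ 3 ≤ h ^ 2 * ω ^ 2 / 4 ∧ 0 < 1 + h ^ 2 * ω ^ 2 / 4 := by
    intro h hh
    have hh0 : 0 < h := lt_of_lt_of_le (by positivity) hh
    have hq3 : 3 ≤ h ^ 2 * ω ^ 2 / 4 := by
      have h4 : 4 / ω * ω = 4 := div_mul_cancel₀ 4 hω.ne'
      nlinarith [mul_le_mul hh hh (le_of_lt (by positivity : (0:ℝ) < 4 / ω)) hh0.le]
    exact ⟨hh0, hq3, by linarith⟩
  refine ⟨?_, ?_, ?_, ?_, ?_⟩
  · refine ((ratlim1 (1 - 2 * β) (-1)).comp hqT).congr' ?_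
    filter_upwards [eventually_ge_atTop (4 / ω)] with h hh
    obtain ⟨hh0, hq3, hD⟩ := hE h hh
    rw [Function.comp_apply, step1 ω β h hω hβ0 hβ1 hh0]
    ring
  · refine ((ratlim2 (2 * β - 1) (6 - 6 * β) (-1)).comp hqT).congr' ?_
    filter_upwards [eventually_ge_atTop (4 / ω)] with h hh
    obtain ⟨hh0, hq3, hD⟩ := hE h hh
    rw [Function.comp_apply, step2 ω β h hω hβ0 hβ1 hh0]
    ring
  · refine ((ratlim2 (8 * β - 5) (10 - 8 * β) (-1)).comp hqT).congr' ?_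
    filter_upwards [eventually_ge_atTop (4 / ω)] with h hh
    obtain ⟨hh0, hq3, hD⟩ := hE h hh
    rw [Function.comp_apply, step3 ω β h hω hβ0 hβ1 hh]
    ring
  · refine ((ratlim2 (5 * β - 3) (10 - 10 * β) (β - 3)).comp hqT).congr' ?_
    filter_upwards [eventually_ge_atTop (4 / ω)] with h hh
    obtain ⟨hh0, hq3, hD⟩ := hE h hh
    rw [Function.comp_apply, step3 ω β h hω hβ0 hβ1 hh]
    field_simp
  · filter_upwards [eventually_ge_atTop (4 / ω)] with h hh
    obtain ⟨hh0, hq3, hD⟩ := hE h hh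
    set q := h ^ 2 * ω ^ 2 / 4 with hqdef
    have hq0 : 0 < q := by linarith
    have hD2 : (0:ℝ) < (1 + q) ^ 2 := by positivity
    refine ⟨?_, ?_, ?_⟩
    · rw [step1 ω β h hω hβ0 hβ1 hh0]
      exact div_neg_of_neg_of_pos (mul_neg_of_neg_of_pos (by linarith) hh0) hD
    · rw [step2 ω β h hω hβ0 hβ1 hh0]
      have hfac : β - 2 + q * (2 - 3 * β) < 0 := by nlinarith
      exact div_neg_of_neg_of_pos (mul_neg_of_neg_of_pos hfac hh0) hD2
    · rw [step3 ω β h hω hβ0 hβ1 hh]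
      have hN3 : 0 < q ^ 2 * (5 * β - 3) + q * (10 - 10 * β) + (β - 3) := by
        have h9 : 9 ≤ q ^ 2 := by nlinarith
        nlinarith
      exact div_pos (mul_pos hN3 hh0) hD2
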